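/- arXiv:1101.5846 — 2 statements merged into one kernel-verified Lean document; each statement's English description precedes it below -/
import Mathlib

section
/- Let δ be a positive root of 𝔤 and suppose δ = δ_1 + δ_2 + ⋯ + δ_n, where each δ_i is a simple positive root of 𝔤 (repetitions among the δ_i are allowed) and n > 1. Then (δ, δ) < Σ_{i=1}^{n} (δ_i, δ_i). -/
/-! Induct on the height `∑ cₐ` of `δ = ∑ cₐ α`. As `⟪δ, δ⟫ = ∑ cₐ ⟪δ, α⟫ > 0`, some simple root
`α` has `⟪δ, α⟫ > 0`, so the reflection `δ - m α`, with Cartan integer `m ≥ 1`, is a root of the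
same length. Its coefficients agree with those of `δ` away from `α`. If they are all nonpositive,
`δ` is a multiple of `α`, hence `δ = α`. Otherwise `δ - m α` is a positive root of smaller height,
and induction gives `⟪δ, δ⟫ ≤ ∑ cₐ ⟪α, α⟫ - m ⟪α, α⟫`. -/

open scoped RealInnerProductSpace

/-- An (abstract) reduced irreducible root system in a finite-dimensional real inner
product space, together with a chosen base (set of simple roots) and the highest root,
with the inner product normalized so that `⟪θ, θ⟫ = 2`.  This encodes the root data of a
finite-dimensional simple complex Lie algebra `𝔤` with the normalized Killing form. -/
structure SimpleRootSystem (V : Type*) [NormedAddCommGroup V] [InnerProductSpace ℝ V]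
    [FiniteDimensional ℝ V] where
  /-- the set of roots Δ -/
  Δ : Finset V
  /-- the set of simple roots R -/
  R : Finset V
  /-- the highest root θ -/
  θ : V
  zero_not_mem : (0 : V) ∉ Δ
  spans : Submodule.span ℝ (Δ : Set V) = ⊤
  cartan_int : ∀ α ∈ Δ, ∀ β ∈ Δ, ∃ m : ℤ, 2 * ⟪β, α⟫ / ⟪α, α⟫ = (m : ℝ)
  reflect_mem : ∀ α ∈ Δ, ∀ β ∈ Δ, β - (2 * ⟪β, α⟫ / ⟪α, α⟫) • α ∈ Δ
  reduced : ∀ α ∈ Δ, ∀ c : ℝ, c • α ∈ Δ → c = 1 ∨ c = -1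
  irreducible : ∀ S T : Set V, (Δ : Set V) = S ∪ T →
    (∀ α ∈ S, ∀ β ∈ T, ⟪α, β⟫ = 0) → S = ∅ ∨ T = ∅
  base_subset : R ⊆ Δ
  base_indep : LinearIndependent ℝ (fun α : {x // x ∈ R} => (α : V))
  root_decomp : ∀ δ ∈ Δ, ∃ c : {x // x ∈ R} → ℤ,
    (δ = ∑ α ∈ R.attach, (c α : ℝ) • (α : V)) ∧ ((∀ α, 0 ≤ c α) ∨ (∀ α, c α ≤ 0))
  highest_mem : θ ∈ Δ
  highest : ∀ δ ∈ Δ, ∃ c : {x // x ∈ R} → ℕ,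
    θ - δ = ∑ α ∈ R.attach, (c α : ℝ) • (α : V)
  norm_theta : ⟪θ, θ⟫ = 2

variable {V : Type*} [NormedAddCommGroup V] [InnerProductSpace ℝ V] [FiniteDimensional ℝ V]

/-- A positive root: a root which is a nonnegative integral combination of simple roots. -/
def SimpleRootSystem.IsPositiveRoot (S : SimpleRootSystem V) (δ : V) : Prop :=
  δ ∈ S.Δ ∧ ∃ c : {x // x ∈ S.R} → ℕ, δ = ∑ α ∈ S.R.attach, (c α : ℝ) • (α : V)

section InnerProductSpace

variable {E : Type*} [NormedAddCommGroup E] [InnerProductSpace ℝ E]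

theorem exists_inner_sum_smul_pos {ι : Type*} [Fintype ι] {b : ι → E} {c : ι → ℝ}
    (hc : ∀ i, 0 ≤ c i) (hv : ∑ i, c i • b i ≠ 0) : ∃ i, 0 < ⟪∑ j, c j • b j, b i⟫ := by
  by_contra! h
  refine hv (real_inner_self_nonpos.mp ?_)
  calc ⟪∑ j, c j • b j, ∑ j, c j • b j⟫ = ∑ j, c j * ⟪∑ i, c i • b i, b j⟫ := by
        simp only [inner_sum, real_inner_smul_right]
    _ ≤ 0 := Finset.sum_nonpos fun j _ => mul_nonpos_of_nonneg_of_nonpos (hc j) (h j)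

theorem inner_self_sub_smul_of_two_mul_inner_eq {α β : E} {m : ℝ}
    (h : 2 * ⟪β, α⟫ = m * ⟪α, α⟫) : ⟪β - m • α, β - m • α⟫ = ⟪β, β⟫ := by
  rw [inner_sub_sub_self, real_inner_smul_left, real_inner_smul_right, real_inner_smul_left,
    real_inner_smul_right, real_inner_comm β α]
  linear_combination (-m) * h

end InnerProductSpace

theorem Pi.single_le_of_le {ι : Type*} [DecidableEq ι] {c : ι → ℕ} {i : ι} {k : ℕ}
    (h : k ≤ c i) : Pi.single i k ≤ c := fun j => by
  rcases eq_or_ne j i with rfl | hj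
  · simpa using h
  · simp [hj]

namespace SimpleRootSystem

open scoped Classical

variable (S : SimpleRootSystem V)

def combination (c : S.R → ℕ) : V := ∑ α, (c α : ℝ) • (α : V)

def weightedNormSq (c : S.R → ℕ) : ℝ := ∑ α, (c α : ℝ) * ⟪(α : V), α⟫

variable {S}

@[simp]
theorem combination_add (c c' : S.R → ℕ) :
    S.combination (c + c') = S.combination c + S.combination c' := by
  simp only [combination, Pi.add_apply, Nat.cast_add, add_smul, Finset.sum_add_distrib]

@[simp]
theorem combination_single (α : S.R) (k : ℕ) :
    S.combination (Pi.single α k) = (k : ℝ) • (α : V) := by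
  simp [combination, Pi.single_apply]

@[simp]
theorem weightedNormSq_add (c c' : S.R → ℕ) :
    S.weightedNormSq (c + c') = S.weightedNormSq c + S.weightedNormSq c' := by
  simp only [weightedNormSq, Pi.add_apply, Nat.cast_add, add_mul, Finset.sum_add_distrib]

@[simp]
theorem weightedNormSq_single (α : S.R) (k : ℕ) :
    S.weightedNormSq (Pi.single α k) = k * ⟪(α : V), α⟫ := by
  simp [weightedNormSq, Pi.single_apply]

theorem ne_zero_of_mem {α : V} (hα : α ∈ S.Δ) : α ≠ 0 :=
  fun h => S.zero_not_mem (h ▸ hα)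

theorem eq_single_one_of_combination_mem {c : S.R → ℕ} {α : S.R}
    (hmem : S.combination c ∈ S.Δ) (hsupp : ∀ γ ≠ α, c γ = 0) : c = Pi.single α 1 := by
  have hδ : S.combination c = (c α : ℝ) • (α : V) := by
    rw [combination, Fintype.sum_eq_single α fun γ hγ => by simp [hsupp γ hγ]]
  have hcα : (c α : ℝ) = 1 := by
    rw [hδ] at hmem
    refine (S.reduced α (S.base_subset α.2) _ hmem).resolve_right fun h => ?_
    linarith [(c α).cast_nonneg (α := ℝ)]
  ext γ
  rcases eq_or_ne γ α with rfl | hγ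
  · simpa using hcα
  · simp [hsupp γ hγ, hγ]

theorem coeff_eq_of_sub_smul_eq {c : S.R → ℕ} {e : S.R → ℤ} {α : S.R} {m : ℝ}
    (he : S.combination c - m • (α : V) = ∑ γ ∈ S.R.attach, (e γ : ℝ) • (γ : V)) (γ : S.R) :
    (e γ : ℝ) = c γ - if γ = α then m else 0 := by
  refine Fintype.linearIndependent_iffₛ.mp S.base_indep (fun γ => (e γ : ℝ))
    (fun γ => c γ - if γ = α then m else 0) ?_ γ
  simp only [sub_smul, ite_smul, zero_smul, Finset.sum_sub_distrib, Fintype.sum_ite_eq']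
  rw [Finset.attach_eq_univ] at he
  exact he.symm

theorem eq_single_one_or_exists_reflection {c : S.R → ℕ} (hmem : S.combination c ∈ S.Δ) :
    (∃ α, c = Pi.single α 1) ∨ ∃ (α : S.R) (k : ℕ) (c' : S.R → ℕ), 0 < k ∧
      c = c' + Pi.single α k ∧ S.combination c' ∈ S.Δ ∧
      ⟪S.combination c', S.combination c'⟫ = ⟪S.combination c, S.combination c⟫ := by
  set δ := S.combination c
  obtain ⟨α, hδα⟩ : ∃ α : S.R, 0 < ⟪δ, (α : V)⟫ :=
    exists_inner_sum_smul_pos (fun _ => Nat.cast_nonneg _) (S.ne_zero_of_mem hmem)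
  have hαΔ : (α : V) ∈ S.Δ := S.base_subset α.2
  have hαα : 0 < ⟪(α : V), α⟫ := real_inner_self_pos.mpr (S.ne_zero_of_mem hαΔ)
  obtain ⟨m, hm⟩ := S.cartan_int α hαΔ δ hmem
  have hm_pos : 0 < m := by
    have : (0 : ℝ) < m := hm ▸ div_pos (by linarith) hαα
    exact_mod_cast this
  have h2m : 2 * ⟪δ, (α : V)⟫ = m * ⟪(α : V), α⟫ := by
    rw [← hm, div_mul_cancel₀ _ hαα.ne']
  have hrefl : δ - (m : ℝ) • (α : V) ∈ S.Δ := hm ▸ S.reflect_mem α hαΔ δ hmem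
  obtain ⟨e, he, hsign⟩ := S.root_decomp _ hrefl
  have hcoeff := coeff_eq_of_sub_smul_eq he
  rcases hsign with hpos | hneg
  · right
    obtain ⟨k, rfl⟩ := Int.eq_ofNat_of_zero_le hm_pos.le
    simp only [Int.cast_natCast] at hcoeff hrefl h2m
    have hkc : k ≤ c α := by
      have : (e α : ℝ) = c α - k := by simpa using hcoeff α
      have : e α = c α - k := by exact_mod_cast this
      linarith [hpos α]
    have hc : c = (c - Pi.single α k) + Pi.single α k :=
      (tsub_add_cancel_of_le (Pi.single_le_of_le hkc)).symm
    have hδ' : S.combination (c - Pi.single α k) = δ - (k : ℝ) • (α : V) := by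
      rw [eq_sub_iff_add_eq, ← combination_single, ← combination_add, ← hc]
    refine ⟨α, k, c - Pi.single α k, by exact_mod_cast hm_pos, hc, by rwa [hδ'], ?_⟩
    rw [hδ']
    exact inner_self_sub_smul_of_two_mul_inner_eq h2m
  · left
    refine ⟨α, eq_single_one_of_combination_mem hmem fun γ hγ => ?_⟩
    have : (e γ : ℝ) = c γ := by simpa [hγ] using hcoeff γ
    have : e γ = c γ := by exact_mod_cast this
    linarith [hneg γ]

theorem eq_single_one_or_inner_self_lt {c : S.R → ℕ} (hmem : S.combination c ∈ S.Δ) :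
    (∃ α, c = Pi.single α 1) ∨ ⟪S.combination c, S.combination c⟫ < S.weightedNormSq c := by
  induction h : ∑ α, c α using Nat.strong_induction_on generalizing c with
  | _ N IH =>
  obtain hsingle | ⟨α, k, c', hk, rfl, hmem', hinner⟩ := eq_single_one_or_exists_reflection hmem
  · exact Or.inl hsingle
  right
  have hle : ⟪S.combination c', S.combination c'⟫ ≤ S.weightedNormSq c' := by
    obtain ⟨β, rfl⟩ | hlt := IH (∑ γ, c' γ) (by simp [← h, Finset.sum_add_distrib, hk]) hmem' rfl
    · simp
    · exact hlt.le
  have hαα : 0 < ⟪(α : V), α⟫ :=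
    real_inner_self_pos.mpr (S.ne_zero_of_mem (S.base_subset α.2))
  have hloss : 0 < (k : ℝ) * ⟪(α : V), α⟫ := mul_pos (by exact_mod_cast hk) hαα
  rw [← hinner, weightedNormSq_add, weightedNormSq_single]
  linarith

theorem exists_combination_eq_sum {ι : Type*} [Fintype ι] {d : ι → V} (hd : ∀ i, d i ∈ S.R) :
    ∃ c : S.R → ℕ, S.combination c = ∑ i, d i ∧
      S.weightedNormSq c = ∑ i, ⟪d i, d i⟫ ∧ ∑ α, c α = Fintype.card ι := by
  let D : ι → S.R := fun i => ⟨d i, hd i⟩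
  refine ⟨fun α => Fintype.card {i // D i = α}, ?_, ?_, ?_⟩
  · simpa [combination, Nat.cast_smul_eq_nsmul] using Fintype.sum_fiberwise' D ((↑) : S.R → V)
  · simpa [weightedNormSq] using Fintype.sum_fiberwise' D fun α : S.R => ⟪(α : V), α⟫
  · have := Fintype.sum_fiberwise' D fun _ => 1
    simp only [Finset.sum_const, Finset.card_univ, smul_eq_mul, mul_one] at this
    exact this

end SimpleRootSystem

/-- **Reformulation of Lemma 4.1.**  If a positive root `δ` of `𝔤` is written as
`δ = δ₁ + ⋯ + δₙ` with each `δᵢ` a simple root (repetitions allowed) and `n > 1`, then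
`(δ, δ) < ∑ᵢ (δᵢ, δᵢ)`. -/
theorem inner_self_lt_sum_inner_self_simple_roots
    (S : SimpleRootSystem V) (δ : V) (hδ : S.IsPositiveRoot δ)
    (n : ℕ) (hn : 1 < n) (d : Fin n → V) (hd : ∀ i, d i ∈ S.R)
    (hsum : δ = ∑ i, d i) :
    ⟪δ, δ⟫ < ∑ i, ⟪d i, d i⟫ := by
  classical
  obtain ⟨c, hcomb, hweight, hheight⟩ := S.exists_combination_eq_sum hd
  subst hsum
  rw [← hcomb, ← hweight]
  refine (S.eq_single_one_or_inner_self_lt (hcomb ▸ hδ.1)).resolve_left ?_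
  rintro ⟨α, rfl⟩
  rw [Fintype.sum_pi_single', Fintype.card_fin] at hheight
  omega
end

section
/- Let δ be a positive root of 𝔤 and suppose δ = δ_1 + δ_2 + ⋯ + δ_s, where each δ_i is a simple positive root of 𝔤 (repetitions among the δ_i are allowed). Then Σ_{i=1}^{s} (δ_i, δ_i) < 2g*, where g* is the dual Coxeter number of 𝔤. Equivalently (without reference to g*): writing the highest root as θ = Σ_{α ∈ R} b_α α with positive integer marks b_α, one has Σ_{i=1}^{s} (δ_i, δ_i) < (θ, θ) + Σ_{α ∈ R} b_α (α, α). -/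
/-!
Let `n_α` be the number of `i` with `δᵢ = α`, so that `δ = ∑ n_α α` and `∑ (δᵢ, δᵢ) = ∑ n_α (α, α)`.
As `θ` is the highest root, `θ - δ` has nonnegative coefficients, and linear independence of the
simple roots gives `n_α ≤ b_α`; strictness comes from `(θ, θ) = 2 > 0`. Since `θ∨ = θ`, comparing
coefficients in `θ = ∑ b∨_α α∨` gives `b_α (α, α) = 2 b∨_α`, hence `2g* = (θ, θ) + ∑ b_α (α, α)`.
-/

open scoped RealInnerProductSpace

variable {V : Type*} [NormedAddCommGroup V] [InnerProductSpace ℝ V] [FiniteDimensional ℝ V]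

open Finset

theorem Finset.sum_comp_eq_sum_card_fiber_smul {ι κ M : Type*} (R : Type*) [Semiring R]
    [AddCommMonoid M] [Module R M] [DecidableEq κ] {s : Finset ι} {t : Finset κ} {g : ι → κ}
    (h : ∀ i ∈ s, g i ∈ t) (f : κ → M) :
    ∑ i ∈ s, f (g i) = ∑ j ∈ t, (#{i ∈ s | g i = j} : R) • f j := by
  simp_rw [Nat.cast_smul_eq_nsmul, ← sum_const, sum_fiberwise_of_maps_to' h]

namespace SimpleRootSystem

variable (S : SimpleRootSystem V)

theorem coeff_eq_of_sum_smul_eq {x y : {α // α ∈ S.R} → ℝ}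
    (h : ∑ α ∈ S.R.attach, x α • (α : V) = ∑ α ∈ S.R.attach, y α • (α : V))
    (α : {α // α ∈ S.R}) : x α = y α :=
  S.base_indep.eq_coords_of_eq h α

theorem inner_self_pos_of_mem_base {α : V} (hα : α ∈ S.R) : 0 < ⟪α, α⟫ :=
  real_inner_self_pos.mpr fun h => S.zero_not_mem (h ▸ S.base_subset hα)

theorem coeff_le_mark {b : {α // α ∈ S.R} → ℕ}
    (hb : S.θ = ∑ α ∈ S.R.attach, (b α : ℝ) • (α : V)) {δ : V} (hδ : δ ∈ S.Δ)
    {n : {α // α ∈ S.R} → ℕ} (hn : δ = ∑ α ∈ S.R.attach, (n α : ℝ) • (α : V))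
    (α : {α // α ∈ S.R}) : n α ≤ b α := by
  obtain ⟨c, hc⟩ := S.highest δ hδ
  have hθ : S.θ = ∑ α ∈ S.R.attach, ((n α : ℝ) + c α) • (α : V) := by
    simp only [add_smul, sum_add_distrib, ← hn, ← hc, add_sub_cancel]
  have : b α = n α + c α := by exact_mod_cast S.coeff_eq_of_sum_smul_eq (hb.symm.trans hθ) α
  omega

theorem sum_inner_self_le_marks {b : {α // α ∈ S.R} → ℕ}
    (hb : S.θ = ∑ α ∈ S.R.attach, (b α : ℝ) • (α : V)) {δ : V} (hδ : δ ∈ S.Δ)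
    {ι : Type*} [Fintype ι] {d : ι → V} (hd : ∀ i, d i ∈ S.R) (hsum : δ = ∑ i, d i) :
    ∑ i, ⟪d i, d i⟫ ≤ ∑ α ∈ S.R.attach, (b α : ℝ) * ⟪(α : V), (α : V)⟫ := by
  classical
  let n : V → ℕ := fun α => #{i | d i = α}
  have hδn : δ = ∑ α ∈ S.R.attach, (n α : ℝ) • (α : V) := by
    rw [hsum, sum_attach S.R fun α => (n α : ℝ) • α]
    exact sum_comp_eq_sum_card_fiber_smul ℝ (fun i _ => hd i) id
  rw [sum_comp_eq_sum_card_fiber_smul ℝ (fun i _ => hd i) fun v => ⟪v, v⟫,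
    ← sum_attach S.R fun α => (n α : ℝ) • ⟪α, α⟫]
  simp only [smul_eq_mul]
  gcongr with α
  · exact (S.inner_self_pos_of_mem_base α.2).le
  · exact_mod_cast S.coeff_le_mark hb hδ hδn α

theorem mark_mul_inner_self_eq_two_mul_comark {b bv : {α // α ∈ S.R} → ℕ}
    (hb : S.θ = ∑ α ∈ S.R.attach, (b α : ℝ) • (α : V))
    (hbv : (2 / ⟪S.θ, S.θ⟫) • S.θ =
      ∑ α ∈ S.R.attach, (bv α : ℝ) • ((2 / ⟪(α : V), (α : V)⟫) • (α : V)))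
    (α : {α // α ∈ S.R}) : b α * ⟪(α : V), (α : V)⟫ = 2 * bv α := by
  have hθ : S.θ = ∑ α ∈ S.R.attach, ((bv α : ℝ) * (2 / ⟪(α : V), (α : V)⟫)) • (α : V) := by
    rw [S.norm_theta, div_self two_ne_zero, one_smul] at hbv
    simpa only [smul_smul] using hbv
  rw [S.coeff_eq_of_sum_smul_eq (hb.symm.trans hθ) α]
  rw [mul_assoc, div_mul_cancel₀ 2 (S.inner_self_pos_of_mem_base α.2).ne', mul_comm]

theorem two_mul_dual_coxeter_eq {b bv : {α // α ∈ S.R} → ℕ}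
    (hb : S.θ = ∑ α ∈ S.R.attach, (b α : ℝ) • (α : V))
    (hbv : (2 / ⟪S.θ, S.θ⟫) • S.θ =
      ∑ α ∈ S.R.attach, (bv α : ℝ) • ((2 / ⟪(α : V), (α : V)⟫) • (α : V))) :
    2 * (1 + ∑ α ∈ S.R.attach, (bv α : ℝ)) =
      ⟪S.θ, S.θ⟫ + ∑ α ∈ S.R.attach, (b α : ℝ) * ⟪(α : V), (α : V)⟫ := by
  simp only [S.mark_mul_inner_self_eq_two_mul_comark hb hbv, ← mul_sum, S.norm_theta]
  ring

end SimpleRootSystem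

/-- **Lemma 6.1.**  If a positive root `δ` of `𝔤` is written as `δ = δ₁ + ⋯ + δ_s` with each
`δᵢ` a simple root (repetitions allowed), then `∑ᵢ (δᵢ, δᵢ) < 2g*`, where `g*` is the dual
Coxeter number of `𝔤` (here `g* = 1 + ∑_α b∨_α`, the comarks `b∨_α` being defined by
`θ∨ = ∑_α b∨_α α∨` with `α∨ = 2α/(α,α)`).  Equivalently, without reference to `g*`: writing
`θ = ∑_α b_α α` with the marks `b_α`, one has `∑ᵢ (δᵢ, δᵢ) < (θ,θ) + ∑_α b_α (α,α)`. -/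
theorem sum_inner_self_simple_roots_lt_two_dual_coxeter
    (S : SimpleRootSystem V) (δ : V) (hδ : S.IsPositiveRoot δ)
    (s : ℕ) (d : Fin s → V) (hd : ∀ i, d i ∈ S.R)
    (hsum : δ = ∑ i, d i)
    -- the marks b_α : θ = ∑_α b_α α
    (b : {x // x ∈ S.R} → ℕ)
    (hb : S.θ = ∑ α ∈ S.R.attach, (b α : ℝ) • (α : V))
    -- the comarks b∨_α : θ∨ = ∑_α b∨_α α∨, where α∨ = (2/(α,α)) α
    (bv : {x // x ∈ S.R} → ℕ)
    (hbv : (2 / ⟪S.θ, S.θ⟫) • S.θ =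
      ∑ α ∈ S.R.attach, (bv α : ℝ) • ((2 / ⟪(α : V), (α : V)⟫) • (α : V)))
    -- the dual Coxeter number g* = 1 + ∑_α b∨_α
    (gstar : ℝ) (hg : gstar = 1 + ∑ α ∈ S.R.attach, (bv α : ℝ)) :
    (∑ i, ⟪d i, d i⟫ < 2 * gstar) ∧
    (∑ i, ⟪d i, d i⟫ < ⟪S.θ, S.θ⟫ + ∑ α ∈ S.R.attach, (b α : ℝ) * ⟪(α : V), (α : V)⟫) := by
  have hle := S.sum_inner_self_le_marks hb hδ.1 hd hsum
  have hlt : ∑ i, ⟪d i, d i⟫ <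
      ⟪S.θ, S.θ⟫ + ∑ α ∈ S.R.attach, (b α : ℝ) * ⟪(α : V), (α : V)⟫ := by
    linarith [S.norm_theta]
  refine ⟨?_, hlt⟩
  rwa [hg, S.two_mul_dual_coxeter_eq hb hbv]
end
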